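/- Let G ∈ ℝ^{m×d} be a matrix and let r be a positive integer with r < min(m, d). Let G = U Σ Vᵀ be a singular value decomposition of G, where U ∈ ℝ^{m×m} and V ∈ ℝ^{d×d} are orthogonal matrices and Σ ∈ ℝ^{m×d} is a rectangular diagonal matrix whose diagonal entries σ₁ ≥ σ₂ ≥ … ≥ σ_{min(m,d)} ≥ 0 are in nonincreasing order. Let V_r ∈ ℝ^{d×r} denote the matrix of the first r columns of V. Then for every A ∈ ℝ^{r×d} and every B ∈ ℝ^{m×r}, the Frobenius norm satisfies ‖G AᵀBᵀBA − G‖_F ≥ ‖G V_r V_rᵀ − G‖_F; that is, the optimization problem min_{A,B} ‖G AᵀBᵀBA − G‖_F attains its minimum at A = V_rᵀ and any B with BᵀB = I_{r×r}. -/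

import Mathlib

open Matrix

/-- The Frobenius norm of a real matrix: the square root of the sum of the
squares of all entries. -/
noncomputable def frobNorm {m n : ℕ} (M : Matrix (Fin m) (Fin n) ℝ) : ℝ :=
  Real.sqrt (∑ i, ∑ j, (M i j) ^ 2)

/-- The matrix formed by the first `r` columns of a square matrix. -/
def firstCols {n : ℕ} (r : ℕ) (h : r ≤ n) (M : Matrix (Fin n) (Fin n) ℝ) :
    Matrix (Fin n) (Fin r) ℝ :=
  Matrix.of fun i j => M i (Fin.castLE h j)

/-!
Write `G = U S Vᵀ` and `D = Vᵀ N V`. Orthogonal invariance of the Frobenius norm gives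
`‖G N - G‖² = ∑ⱼ wⱼ ‖(D - 1)ⱼ‖²`, where `wⱼ = σⱼ²` (or `0`) is nonincreasing in `j`.
For `N = V_r V_rᵀ`, `D` is the projection onto the first `r` coordinates and the sum
is `∑_{j ≥ r} wⱼ`. For `N = AᵀBᵀBA`, the rows of `D` lie in a subspace `K` of dimension at most
`r`, so `‖(D - 1)ⱼ‖² ≥ 1 - qⱼ` with `qⱼ = ‖P_K eⱼ‖² ∈ [0, 1]` and `∑ⱼ qⱼ = dim K ≤ r`.
Since the weights are nonincreasing, `∑ⱼ wⱼ qⱼ ≤ ∑_{j < r} wⱼ`, which is the claim.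
-/

open Finset

theorem sum_mul_le_sum_of_sum_le_card {ι : Type*} [Fintype ι] [DecidableEq ι] (t : Finset ι)
    {w q : ι → ℝ} {c : ℝ} (hc : 0 ≤ c) (hwt : ∀ i ∈ t, c ≤ w i) (hwtc : ∀ i ∉ t, w i ≤ c)
    (hq0 : ∀ i, 0 ≤ q i) (hq1 : ∀ i, q i ≤ 1) (hq : ∑ i, q i ≤ #t) :
    ∑ i, w i * q i ≤ ∑ i ∈ t, w i := by
  have hterm : ∀ i, (w i - c) * (q i - if i ∈ t then 1 else 0) ≤ 0 := by
    intro i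
    split_ifs with hi
    · exact mul_nonpos_of_nonneg_of_nonpos (by linarith [hwt i hi]) (by linarith [hq1 i])
    · exact mul_nonpos_of_nonpos_of_nonneg (by linarith [hwtc i hi]) (by linarith [hq0 i])
  have hexpand : ∑ i, (w i - c) * (q i - if i ∈ t then 1 else 0)
      = ∑ i, w i * q i - ∑ i ∈ t, w i - c * (∑ i, q i - #t) := by
    simp only [mul_sub, sub_mul, Finset.sum_sub_distrib, mul_ite, mul_one, mul_zero,
      Finset.sum_ite_mem, Finset.univ_inter, ← Finset.mul_sum, Finset.sum_const, nsmul_eq_mul]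
    ring
  nlinarith [Finset.sum_nonpos fun i (_ : i ∈ Finset.univ) => hterm i]

theorem norm_sq_sub_norm_sq_starProjection_le {E : Type*} [NormedAddCommGroup E]
    [InnerProductSpace ℝ E] (K : Submodule ℝ E) [K.HasOrthogonalProjection] (x : E) {y : E}
    (hy : y ∈ K) : ‖x‖ ^ 2 - ‖K.starProjection x‖ ^ 2 ≤ ‖y - x‖ ^ 2 := by
  have hpyth := K.norm_sq_eq_add_norm_sq_starProjection x
  have hmin : ‖x - K.starProjection x‖ ≤ ‖x - y‖ := by
    rw [Submodule.starProjection_minimal]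
    exact ciInf_le ⟨0, Set.forall_mem_range.mpr fun _ => norm_nonneg _⟩ (⟨y, hy⟩ : K)
  rw [Submodule.starProjection_orthogonal', _root_.sub_apply, one_apply_eq_self] at hpyth
  rw [norm_sub_rev y]
  nlinarith [norm_nonneg (x - K.starProjection x)]

theorem sum_norm_sq_starProjection_eq_finrank {ι E : Type*} [Fintype ι] [NormedAddCommGroup E]
    [InnerProductSpace ℝ E] [FiniteDimensional ℝ E] (K : Submodule ℝ E)
    (b : OrthonormalBasis ι ℝ E) :
    ∑ i, ‖K.starProjection (b i)‖ ^ 2 = Module.finrank ℝ K := by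
  have hproj : LinearMap.IsProj K K.starProjection.toLinearMap :=
    ⟨K.starProjection_apply_mem, fun x hx => Submodule.starProjection_eq_self_iff.mpr hx⟩
  rw [← hproj.trace, LinearMap.trace_eq_sum_inner _ b]
  refine Finset.sum_congr rfl fun i _ => ?_
  simpa [real_inner_comm] using (K.re_inner_starProjection_eq_normSq (b i)).symm

section

variable {l m n : Type*} [Fintype l] [Fintype m] [Fintype n]

theorem sum_sq_eq_trace_transpose_mul (M : Matrix m n ℝ) :
    ∑ i, ∑ j, M i j ^ 2 = (Mᵀ * M).trace := by
  simp only [trace, Matrix.diag, mul_apply, transpose_apply, sq]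
  exact Finset.sum_comm

theorem sum_sq_mul_mul_transpose_of_orthogonal [DecidableEq m] [DecidableEq n]
    {U : Matrix m m ℝ} {V : Matrix n n ℝ} (hU : Uᵀ * U = 1) (hV : Vᵀ * V = 1)
    (X : Matrix m n ℝ) : ∑ i, ∑ j, (U * X * Vᵀ) i j ^ 2 = ∑ i, ∑ j, X i j ^ 2 := by
  rw [sum_sq_eq_trace_transpose_mul, sum_sq_eq_trace_transpose_mul, transpose_mul,
    transpose_mul, transpose_transpose]
  calc (V * (Xᵀ * Uᵀ) * (U * X * Vᵀ)).trace = (V * (Xᵀ * (Uᵀ * U) * X) * Vᵀ).trace := by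
        simp only [Matrix.mul_assoc]
    _ = (Xᵀ * X).trace := by
        rw [trace_mul_comm, ← Matrix.mul_assoc, hV, hU, Matrix.one_mul, Matrix.mul_one]

theorem sum_sq_mul_eq_sum_mul_sum_sq [DecidableEq m] {S : Matrix l m ℝ}
    (hS : Sᵀ * S = diagonal fun j => ∑ i, S i j ^ 2) (K : Matrix m n ℝ) :
    ∑ i, ∑ k, (S * K) i k ^ 2 = ∑ j, (∑ i, S i j ^ 2) * ∑ k, K j k ^ 2 := by
  rw [sum_sq_eq_trace_transpose_mul, transpose_mul, Matrix.mul_assoc, ← Matrix.mul_assoc Sᵀ, hS,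
    trace_mul_comm, Matrix.mul_assoc, trace]
  simp only [Matrix.diag_apply, diagonal_mul]
  simp only [mul_apply, transpose_apply, sq]

end

theorem toLp_mul_row_mem_span {l m n : Type*} [Fintype m] (M : Matrix l m ℝ) (Y : Matrix m n ℝ)
    (j : l) :
    WithLp.toLp 2 ((M * Y) j) ∈ Submodule.span ℝ (Set.range fun a => WithLp.toLp 2 (Y a)) := by
  rw [Submodule.mem_span_range_iff_exists_fun]
  refine ⟨M j, ?_⟩
  ext k
  simp [mul_apply, Finset.sum_apply]

theorem sum_filter_le_sum_mul_sum_sq_sub_one_of_row_mem {d r : ℕ} (hr : r < d) {w : Fin d → ℝ}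
    (hw : Antitone w) (hw0 : ∀ j, 0 ≤ w j) {K : Submodule ℝ (EuclideanSpace ℝ (Fin d))}
    (hK : Module.finrank ℝ K ≤ r) {D : Matrix (Fin d) (Fin d) ℝ}
    (hD : ∀ j, WithLp.toLp 2 (D j) ∈ K) :
    ∑ j : Fin d with r ≤ j.val, w j ≤ ∑ j, w j * ∑ k, (D - 1) j k ^ 2 := by
  set e := EuclideanSpace.basisFun (Fin d) ℝ
  set q : Fin d → ℝ := fun j => ‖K.starProjection (e j)‖ ^ 2
  have hdefect : ∀ j, 1 - q j ≤ ∑ k, (D - 1) j k ^ 2 := by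
    intro j
    have h := norm_sq_sub_norm_sq_starProjection_le K (e j) (hD j)
    rw [e.norm_eq_one, one_pow, EuclideanSpace.norm_sq_eq (WithLp.toLp 2 (D j) - e j)] at h
    convert h using 2 with k
    simp [e, one_apply, eq_comm]
  have hq1 : ∀ j, q j ≤ 1 := fun j => by
    simpa [q, e.norm_eq_one] using
      pow_le_pow_left₀ (norm_nonneg _) (K.norm_starProjection_apply_le (e j)) 2
  have hq : ∑ j, q j ≤ #{j : Fin d | j.val < r} := by
    rw [sum_norm_sq_starProjection_eq_finrank, Fin.card_filter_val_lt, min_eq_right hr.le]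
    exact_mod_cast hK
  have hwq : ∑ j, w j * q j ≤ ∑ j : Fin d with j.val < r, w j :=
    sum_mul_le_sum_of_sum_le_card _ (c := w ⟨r, hr⟩) (hw0 _)
      (fun j hj => hw (Fin.le_iff_val_le_val.mpr (Finset.mem_filter.mp hj).2.le))
      (fun j hj => hw (Fin.le_iff_val_le_val.mpr (by simpa using hj)))
      (fun j => sq_nonneg _) hq1 hq
  calc ∑ j : Fin d with r ≤ j.val, w j = ∑ j, w j - ∑ j : Fin d with j.val < r, w j := by
        rw [eq_sub_iff_add_eq,
          ← Finset.sum_filter_add_sum_filter_not Finset.univ (fun j : Fin d => r ≤ j.val)]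
        simp [not_le]
    _ ≤ ∑ j, w j * (1 - q j) := by
        simp only [mul_one_sub, Finset.sum_sub_distrib]
        linarith
    _ ≤ ∑ j, w j * ∑ k, (D - 1) j k ^ 2 :=
        Finset.sum_le_sum fun j _ => mul_le_mul_of_nonneg_left (hdefect j) (hw0 j)

theorem transpose_mul_self_eq_diagonal {m d : ℕ} {S : Matrix (Fin m) (Fin d) ℝ}
    (hS : ∀ (i : Fin m) (j : Fin d), (i : ℕ) ≠ j → S i j = 0) :
    Sᵀ * S = diagonal fun j => ∑ i, S i j ^ 2 := by
  ext j k
  rw [mul_apply, diagonal_apply]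
  split_ifs with hjk
  · simp [hjk, sq]
  · refine Finset.sum_eq_zero fun i _ => ?_
    by_cases hij : (i : ℕ) = j
    · rw [transpose_apply, hS i k (fun h => hjk (Fin.ext (hij.symm.trans h))), mul_zero]
    · rw [transpose_apply, hS i j hij, zero_mul]

theorem antitone_sum_sq_col {m d : ℕ} {S : Matrix (Fin m) (Fin d) ℝ} {σ : ℕ → ℝ}
    (hSdiag : ∀ (i : Fin m) (j : Fin d), (i : ℕ) = (j : ℕ) → S i j = σ (i : ℕ))
    (hSoff : ∀ (i : Fin m) (j : Fin d), (i : ℕ) ≠ (j : ℕ) → S i j = 0)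
    (hσnonneg : ∀ i, i < min m d → 0 ≤ σ i)
    (hσanti : ∀ i j, i ≤ j → j < min m d → σ j ≤ σ i) :
    Antitone fun j : Fin d => ∑ i, S i j ^ 2 := by
  have hcol : ∀ j : Fin d, ∑ i, S i j ^ 2 = if (j : ℕ) < m then σ j ^ 2 else 0 := by
    intro j
    split_ifs with hj
    · rw [Finset.sum_eq_single ⟨j, hj⟩, hSdiag _ _ rfl]
      · intro i _ hi
        rw [hSoff i j (fun h => hi (Fin.ext h)), sq, zero_mul]
      · simp
    · exact Finset.sum_eq_zero fun i _ => by rw [hSoff i j (by omega), sq, zero_mul]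
  intro j k hjk
  simp only [hcol]
  split_ifs with hk hj hj
  · have hkmd : (k : ℕ) < min m d := lt_min hk k.isLt
    exact pow_le_pow_left₀ (hσnonneg k hkmd) (hσanti j k hjk hkmd) 2
  · exact absurd (lt_of_le_of_lt (Fin.le_iff_val_le_val.mp hjk) hk) hj
  · positivity
  · rfl

theorem firstCols_eq_mul {n r : ℕ} (h : r ≤ n) (M : Matrix (Fin n) (Fin n) ℝ) :
    firstCols r h M = M * firstCols r h 1 := by
  ext i j
  simp [firstCols, mul_apply, one_apply]

theorem firstCols_one_mul_transpose {n r : ℕ} (h : r ≤ n) :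
    firstCols r h 1 * (firstCols r h 1)ᵀ
      = diagonal fun j : Fin n => if (j : ℕ) < r then 1 else 0 := by
  ext i j
  simp only [firstCols, mul_apply, of_apply, transpose_apply, one_apply, diagonal_apply, ite_mul,
    one_mul, zero_mul, ← ite_and]
  by_cases hi : (i : ℕ) < r
  · rw [Finset.sum_eq_single ⟨i, hi⟩]
    · simp [hi, eq_comm]
    · rintro a - ha
      exact if_neg fun hia => ha (Fin.ext (by simp [hia.1]))
    · simp
  · rw [if_neg fun hij => hi hij.2, Finset.sum_eq_zero]
    exact fun a _ => if_neg fun hia => hi (by simp [hia.1])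

theorem transpose_mul_firstCols_mul_transpose_mul {n r : ℕ} (h : r ≤ n)
    {V : Matrix (Fin n) (Fin n) ℝ} (hV : Vᵀ * V = 1) :
    Vᵀ * (firstCols r h V * (firstCols r h V)ᵀ) * V
      = diagonal fun j : Fin n => if (j : ℕ) < r then 1 else 0 := by
  rw [← firstCols_one_mul_transpose h, firstCols_eq_mul h V, transpose_mul]
  calc Vᵀ * (V * firstCols r h 1 * ((firstCols r h 1)ᵀ * Vᵀ)) * V
      = Vᵀ * V * firstCols r h 1 * ((firstCols r h 1)ᵀ * (Vᵀ * V)) := by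
        simp only [Matrix.mul_assoc]
    _ = firstCols r h 1 * (firstCols r h 1)ᵀ := by rw [hV, Matrix.one_mul, Matrix.mul_one]

theorem sum_mul_sum_sq_diagonal_indicator_sub_one {n : ℕ} (r : ℕ) (w : Fin n → ℝ) :
    ∑ j, w j * ∑ k, (diagonal (fun j : Fin n => if (j : ℕ) < r then (1 : ℝ) else 0) - 1) j k ^ 2
      = ∑ j : Fin n with r ≤ j.val, w j := by
  rw [← diagonal_one, diagonal_sub, Finset.sum_filter]
  refine Finset.sum_congr rfl fun j _ => ?_
  by_cases hj : (j : ℕ) < r <;> simp [diagonal_apply, ite_pow, hj]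

theorem mul_sub_self_eq_conj {m d : ℕ} (U : Matrix (Fin m) (Fin m) ℝ)
    (S : Matrix (Fin m) (Fin d) ℝ) {V : Matrix (Fin d) (Fin d) ℝ} (hV : V * Vᵀ = 1)
    (N : Matrix (Fin d) (Fin d) ℝ) :
    U * S * Vᵀ * N - U * S * Vᵀ = U * (S * (Vᵀ * N * V - 1)) * Vᵀ := by
  simp only [Matrix.mul_sub, Matrix.sub_mul, Matrix.mul_one, Matrix.mul_assoc, hV]

theorem frobNorm_sub_ge_of_svd_general {m d r : ℕ} (hrmd : r < min m d)
    (G : Matrix (Fin m) (Fin d) ℝ)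
    (U : Matrix (Fin m) (Fin m) ℝ) (V : Matrix (Fin d) (Fin d) ℝ)
    (S : Matrix (Fin m) (Fin d) ℝ) (σ : ℕ → ℝ)
    (hU : Uᵀ * U = 1) (hV : Vᵀ * V = 1)
    (hSdiag : ∀ (i : Fin m) (j : Fin d), (i : ℕ) = (j : ℕ) → S i j = σ (i : ℕ))
    (hSoff : ∀ (i : Fin m) (j : Fin d), (i : ℕ) ≠ (j : ℕ) → S i j = 0)
    (hσnonneg : ∀ i, i < min m d → 0 ≤ σ i)
    (hσanti : ∀ i j, i ≤ j → j < min m d → σ j ≤ σ i)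
    (hsvd : G = U * S * Vᵀ)
    (A : Matrix (Fin r) (Fin d) ℝ) (B : Matrix (Fin m) (Fin r) ℝ) :
    frobNorm (G * Aᵀ * Bᵀ * B * A - G) ≥
      frobNorm (G * firstCols r (le_of_lt (lt_of_lt_of_le hrmd (min_le_right m d))) V *
        (firstCols r (le_of_lt (lt_of_lt_of_le hrmd (min_le_right m d))) V)ᵀ - G) := by
  have hfrob : ∀ N : Matrix (Fin d) (Fin d) ℝ, ∑ i, ∑ k, (G * N - G) i k ^ 2
      = ∑ j, (∑ i, S i j ^ 2) * ∑ k, (Vᵀ * N * V - 1) j k ^ 2 := fun N => by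
    rw [hsvd, mul_sub_self_eq_conj U S (mul_eq_one_comm.mp hV),
      sum_sq_mul_mul_transpose_of_orthogonal hU hV,
      sum_sq_mul_eq_sum_mul_sum_sq (transpose_mul_self_eq_diagonal hSoff)]
  have hrows : Vᵀ * (Aᵀ * (Bᵀ * (B * A))) * V = (A * V)ᵀ * (Bᵀ * B * A * V) := by
    simp only [transpose_mul, Matrix.mul_assoc]
  have hK : Module.finrank ℝ
      (Submodule.span ℝ (Set.range fun a => WithLp.toLp 2 ((Bᵀ * B * A * V) a))) ≤ r :=
    (finrank_range_le_card _).trans_eq (Fintype.card_fin r)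
  rw [ge_iff_le, frobNorm, frobNorm]
  refine Real.sqrt_le_sqrt ?_
  simp only [Matrix.mul_assoc]
  rw [hfrob, hfrob, transpose_mul_firstCols_mul_transpose_mul _ hV,
    sum_mul_sum_sq_diagonal_indicator_sub_one, hrows]
  exact sum_filter_le_sum_mul_sum_sq_sub_one_of_row_mem (lt_of_lt_of_le hrmd (min_le_right m d))
    (antitone_sum_sq_col hSdiag hSoff hσnonneg hσanti)
    (fun j => Finset.sum_nonneg fun i _ => sq_nonneg (S i j)) hK
    (toLp_mul_row_mem_span (A * V)ᵀ (Bᵀ * B * A * V))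

/-- Let `G = U Σ Vᵀ` be an SVD of `G ∈ ℝ^{m×d}` with nonincreasing nonnegative
singular values, `0 < r < min m d`, and `V_r` the first `r` columns of `V`.
Then for all `A ∈ ℝ^{r×d}`, `B ∈ ℝ^{m×r}`,
`‖G AᵀBᵀBA − G‖_F ≥ ‖G V_r V_rᵀ − G‖_F`. -/
theorem frobNorm_sub_ge_of_svd {m d r : ℕ} (hr : 0 < r) (hrmd : r < min m d)
    (G : Matrix (Fin m) (Fin d) ℝ)
    (U : Matrix (Fin m) (Fin m) ℝ) (V : Matrix (Fin d) (Fin d) ℝ)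
    (S : Matrix (Fin m) (Fin d) ℝ) (σ : ℕ → ℝ)
    (hU : Uᵀ * U = 1) (hV : Vᵀ * V = 1)
    (hSdiag : ∀ (i : Fin m) (j : Fin d), (i : ℕ) = (j : ℕ) → S i j = σ (i : ℕ))
    (hSoff : ∀ (i : Fin m) (j : Fin d), (i : ℕ) ≠ (j : ℕ) → S i j = 0)
    (hσnonneg : ∀ i, i < min m d → 0 ≤ σ i)
    (hσanti : ∀ i j, i ≤ j → j < min m d → σ j ≤ σ i)
    (hsvd : G = U * S * Vᵀ)
    (A : Matrix (Fin r) (Fin d) ℝ) (B : Matrix (Fin m) (Fin r) ℝ) :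
    frobNorm (G * Aᵀ * Bᵀ * B * A - G) ≥
      frobNorm (G * firstCols r (le_of_lt (lt_of_lt_of_le hrmd (min_le_right m d))) V *
        (firstCols r (le_of_lt (lt_of_lt_of_le hrmd (min_le_right m d))) V)ᵀ - G) :=
  frobNorm_sub_ge_of_svd_general hrmd G U V S σ hU hV hSdiag hSoff hσnonneg hσanti hsvd A B
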